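/- Let (X,ρ) be a compact metric space, f : X → X continuous, k ∈ ℕ, and x ∈ X. Then entr⁺(f^k, x) ≥ k · entr⁺(f, x) and entr⁻(f^k, x) ≥ k · entr⁻(f, x). -/

import Mathlib

open Filter Topology Set MeasureTheory

section Defs

variable {X : Type*} [MetricSpace X]

/-- Bowen's metric `ρ^f_m(y,z) = max_{0 ≤ i < m} ρ(f^i y, f^i z)`. -/
noncomputable def bowenDist (f : X → X) (m : ℕ) (y z : X) : ℝ :=
  (((Finset.range m).sup fun i => nndist (f^[i] y) (f^[i] z)) : NNReal)

open scoped Classical in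
/-- The correlation sum `C^f_m(x,n,ε)`. -/
noncomputable def corrSum (f : X → X) (m : ℕ) (x : X) (n : ℕ) (ε : ℝ) : ℝ :=
  (((Finset.range n ×ˢ Finset.range n).filter fun q =>
      bowenDist f m (f^[q.1] x) (f^[q.2] x) ≤ ε).card : ℝ) / (n : ℝ) ^ 2

/-- `ĉ^f_m(x,ε) = limsup_{n→∞} C^f_m(x,n,ε)`. -/
noncomputable def corrUpper (f : X → X) (m : ℕ) (x : X) (ε : ℝ) : ℝ :=
  Filter.limsup (fun n : ℕ => corrSum f m x n ε) Filter.atTop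

/-- `č^f_m(x,ε) = liminf_{n→∞} C^f_m(x,n,ε)`. -/
noncomputable def corrLower (f : X → X) (m : ℕ) (x : X) (ε : ℝ) : ℝ :=
  Filter.liminf (fun n : ℕ => corrSum f m x n ε) Filter.atTop

/-- The upper local correlation entropy `entr⁺(f,x) = lim_{ε→0⁺} limsup_m (−1/m) log č^f_m(x,ε)`;
the limit as `ε → 0⁺` exists by monotonicity in `ε`, and is expressed here as a `limsup`
along `𝓝[>] 0` (with values in `EReal`). -/
noncomputable def entrUpper (f : X → X) (x : X) : EReal :=
  Filter.limsup (fun ε : ℝ =>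
      Filter.limsup (fun m : ℕ => ((-(1 / (m : ℝ)) * Real.log (corrLower f m x ε) : ℝ) : EReal))
        Filter.atTop)
    (𝓝[>] (0 : ℝ))

/-- The lower local correlation entropy `entr⁻(f,x) = lim_{ε→0⁺} liminf_m (−1/m) log ĉ^f_m(x,ε)`. -/
noncomputable def entrLower (f : X → X) (x : X) : EReal :=
  Filter.limsup (fun ε : ℝ =>
      Filter.liminf (fun m : ℕ => ((-(1 / (m : ℝ)) * Real.log (corrUpper f m x ε) : ℝ) : EReal))
        Filter.atTop)
    (𝓝[>] (0 : ℝ))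

/-- `r_m(ε,K)`: the smallest cardinality of a subset of `K` which `(m,ε)`-spans `K`. -/
noncomputable def spanNumOn (f : X → X) (K : Set X) (m : ℕ) (ε : ℝ) : ℕ :=
  sInf {k : ℕ | ∃ A : Finset X, ↑A ⊆ K ∧ A.card = k ∧ ∀ y ∈ K, ∃ a ∈ A, bowenDist f m y a ≤ ε}

/-- Bowen's topological entropy of `f` on `K` (for `K = univ`, of `f` itself;
for closed invariant `K`, of the restriction of `f` to `K`). -/
noncomputable def topEntropyOn (f : X → X) (K : Set X) : EReal :=
  Filter.limsup (fun ε : ℝ =>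
      Filter.limsup (fun n : ℕ => (((1 / (n : ℝ)) * Real.log (spanNumOn f K n ε) : ℝ) : EReal))
        Filter.atTop)
    (𝓝[>] (0 : ℝ))

end Defs


section Aux

open scoped Classical

variable {X : Type*} [MetricSpace X]

lemma bowenDist_nonneg (f : X → X) (m : ℕ) (y z : X) : 0 ≤ bowenDist f m y z :=
  NNReal.coe_nonneg _

lemma bowenDist_le_iff {f : X → X} {m : ℕ} {y z : X} {ε : ℝ} (hε : 0 ≤ ε) :
    bowenDist f m y z ≤ ε ↔ ∀ i < m, dist (f^[i] y) (f^[i] z) ≤ ε := by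
  unfold bowenDist
  constructor
  · intro h i hi
    refine le_trans ?_ h
    have : nndist (f^[i] y) (f^[i] z) ≤
        (Finset.range m).sup fun i => nndist (f^[i] y) (f^[i] z) :=
      Finset.le_sup (f := fun j => nndist (f^[j] y) (f^[j] z)) (Finset.mem_range.2 hi)
    exact_mod_cast this
  · intro h
    have h2 : ((Finset.range m).sup fun i => nndist (f^[i] y) (f^[i] z)) ≤ ε.toNNReal := by
      apply Finset.sup_le
      intro i hi
      rw [← NNReal.coe_le_coe, coe_nndist, Real.coe_toNNReal ε hε]
      exact h i (Finset.mem_range.1 hi)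
    calc (((Finset.range m).sup fun i => nndist (f^[i] y) (f^[i] z) : NNReal) : ℝ)
        ≤ (ε.toNNReal : ℝ) := NNReal.coe_le_coe.2 h2
      _ = ε := Real.coe_toNNReal ε hε

lemma bowenDist_mono {f : X → X} {m m' : ℕ} (h : m ≤ m') (y z : X) :
    bowenDist f m y z ≤ bowenDist f m' y z := by
  unfold bowenDist
  exact NNReal.coe_le_coe.2 (Finset.sup_mono (Finset.range_subset_range.2 h))

lemma exists_unif_delta [CompactSpace X] (g : X → X) (hg : Continuous g) (m : ℕ)
    {ε : ℝ} (hε : 0 < ε) :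
    ∃ δ : ℝ, 0 < δ ∧ ∀ y z : X, dist y z ≤ δ → ∀ i < m, dist (g^[i] y) (g^[i] z) ≤ ε := by
  induction m with
  | zero => exact ⟨ε, hε, fun y z h i hi => absurd hi (Nat.not_lt_zero i)⟩
  | succ m ih =>
    obtain ⟨δ₁, hδ₁, h₁⟩ := ih
    have hgi : UniformContinuous (g^[m]) := CompactSpace.uniformContinuous_of_continuous (hg.iterate m)
    rw [Metric.uniformContinuous_iff] at hgi
    obtain ⟨δ₂, hδ₂, h₂⟩ := hgi ε hε
    refine ⟨min δ₁ (δ₂ / 2), by positivity, fun y z h i hi => ?_⟩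
    rcases Nat.lt_succ_iff_lt_or_eq.1 hi with hi | rfl
    · exact h₁ y z (h.trans (min_le_left _ _)) i hi
    · exact (h₂ (lt_of_le_of_lt (h.trans (min_le_right _ _)) (by linarith))).le

lemma bowen_iter_key {f : X → X} {k : ℕ} (hk : 0 < k) (m : ℕ) {δ ε : ℝ} (hδ : 0 ≤ δ)
    (hε : 0 ≤ ε)
    (h : ∀ y z : X, dist y z ≤ δ → ∀ r < k, dist (f^[r] y) (f^[r] z) ≤ ε) :
    ∀ y z : X, bowenDist (f^[k]) m y z ≤ δ → bowenDist f (k * m) y z ≤ ε := by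
  intro y z hb
  rw [bowenDist_le_iff hε]
  intro i hi
  rw [bowenDist_le_iff hδ] at hb
  have h1 : i % k + k * (i / k) = i := Nat.mod_add_div i k
  have hq : i / k < m := (Nat.div_lt_iff_lt_mul hk).2 (by rwa [mul_comm] at hi)
  have hd : dist (f^[k * (i / k)] y) (f^[k * (i / k)] z) ≤ δ := by
    have := hb (i / k) hq
    rwa [← Function.iterate_mul] at this
  have := h _ _ hd (i % k) (Nat.mod_lt i hk)
  rwa [← Function.iterate_add_apply, ← Function.iterate_add_apply, h1] at this

lemma corr_card_le {f : X → X} {k : ℕ} (hk : 0 < k) (m : ℕ) (x : X) {n N : ℕ}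
    (h : k * n ≤ N) {δ ε : ℝ}
    (key : ∀ y z : X, bowenDist (f^[k]) m y z ≤ δ → bowenDist f (k * m) y z ≤ ε) :
    ((Finset.range n ×ˢ Finset.range n).filter fun q =>
        bowenDist (f^[k]) m ((f^[k])^[q.1] x) ((f^[k])^[q.2] x) ≤ δ).card ≤
    ((Finset.range N ×ˢ Finset.range N).filter fun q =>
        bowenDist f (k * m) (f^[q.1] x) (f^[q.2] x) ≤ ε).card := by
  apply Finset.card_le_card_of_injOn (fun q => (k * q.1, k * q.2))
  · intro q hq
    simp only [Finset.mem_coe, Finset.mem_filter, Finset.mem_product, Finset.mem_range] at hq ⊢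
    obtain ⟨⟨h1, h2⟩, h3⟩ := hq
    refine ⟨⟨lt_of_lt_of_le (mul_lt_mul_of_pos_left h1 hk) h,
      lt_of_lt_of_le (mul_lt_mul_of_pos_left h2 hk) h⟩, ?_⟩
    rw [Function.iterate_mul, Function.iterate_mul]
    exact key _ _ h3
  · intro a _ b _ hab
    simp only [Prod.mk.injEq] at hab
    exact Prod.ext (Nat.eq_of_mul_eq_mul_left hk hab.1) (Nat.eq_of_mul_eq_mul_left hk hab.2)

lemma corrSum_nonneg (f : X → X) (m : ℕ) (x : X) (n : ℕ) (ε : ℝ) :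
    0 ≤ corrSum f m x n ε := by
  unfold corrSum
  positivity

lemma corrSum_le_one (f : X → X) (m : ℕ) (x : X) (n : ℕ) (ε : ℝ) :
    corrSum f m x n ε ≤ 1 := by
  unfold corrSum
  rcases Nat.eq_zero_or_pos n with rfl | hn
  · simp
  · rw [div_le_one (by positivity)]
    have h1 : ((Finset.range n ×ˢ Finset.range n).filter fun q =>
        bowenDist f m (f^[q.1] x) (f^[q.2] x) ≤ ε).card ≤ n * n := by
      calc _ ≤ (Finset.range n ×ˢ Finset.range n).card := Finset.card_filter_le _ _
        _ = n * n := by simp [Finset.card_product]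
    calc (((Finset.range n ×ˢ Finset.range n).filter fun q =>
        bowenDist f m (f^[q.1] x) (f^[q.2] x) ≤ ε).card : ℝ) ≤ ((n * n : ℕ) : ℝ) := by
          exact_mod_cast h1
      _ = (n : ℝ) ^ 2 := by push_cast; ring

lemma corrSum_mono_eps {f : X → X} {m : ℕ} {x : X} {n : ℕ} {ε ε' : ℝ} (h : ε ≤ ε') :
    corrSum f m x n ε ≤ corrSum f m x n ε' := by
  unfold corrSum
  rcases Nat.eq_zero_or_pos n with rfl | hn
  · simp
  · apply div_le_div_of_nonneg_right ?_ (by positivity)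
    have hsub := Finset.monotone_filter_right (Finset.range n ×ˢ Finset.range n)
      (p := fun q : ℕ × ℕ => bowenDist f m (f^[q.1] x) (f^[q.2] x) ≤ ε)
      (q := fun q : ℕ × ℕ => bowenDist f m (f^[q.1] x) (f^[q.2] x) ≤ ε')
      (fun q _ hq => le_trans hq h)
    exact_mod_cast Finset.card_le_card hsub

lemma corrSum_anti_m {f : X → X} {m m' : ℕ} {x : X} {n : ℕ} {ε : ℝ} (h : m ≤ m') :
    corrSum f m' x n ε ≤ corrSum f m x n ε := by
  unfold corrSum
  rcases Nat.eq_zero_or_pos n with rfl | hn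
  · simp
  · apply div_le_div_of_nonneg_right ?_ (by positivity)
    have hsub := Finset.monotone_filter_right (Finset.range n ×ˢ Finset.range n)
      (p := fun q : ℕ × ℕ => bowenDist f m' (f^[q.1] x) (f^[q.2] x) ≤ ε)
      (q := fun q : ℕ × ℕ => bowenDist f m (f^[q.1] x) (f^[q.2] x) ≤ ε)
      (fun q _ hq => le_trans (bowenDist_mono h _ _) hq)
    exact_mod_cast Finset.card_le_card hsub

/-! Real sequence liminf/limsup helpers -/

lemma real_liminf_le_liminf_comp {u : ℕ → ℝ} (h0 : ∀ n, 0 ≤ u n) (h1 : ∀ n, u n ≤ 1)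
    {g : ℕ → ℕ} (hg : Tendsto g atTop atTop) :
    liminf u atTop ≤ liminf (fun n => u (g n)) atTop := by
  rw [liminf_eq, liminf_eq]
  apply csSup_le_csSup
  · refine ⟨1, fun a ha => ?_⟩
    obtain ⟨n, hn⟩ := ha.exists
    exact hn.trans (h1 _)
  · exact ⟨0, Eventually.of_forall h0⟩
  · intro a ha
    exact hg.eventually ha

lemma real_limsup_comp_le_limsup {u : ℕ → ℝ} (h0 : ∀ n, 0 ≤ u n) (h1 : ∀ n, u n ≤ 1)
    {g : ℕ → ℕ} (hg : Tendsto g atTop atTop) :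
    limsup (fun n => u (g n)) atTop ≤ limsup u atTop := by
  rw [limsup_eq, limsup_eq]
  apply csInf_le_csInf
  · refine ⟨0, fun a ha => ?_⟩
    obtain ⟨n, hn⟩ := ha.exists
    exact (h0 _).trans hn
  · exact ⟨1, Eventually.of_forall h1⟩
  · intro a ha
    exact hg.eventually ha

lemma real_liminf_const_mul {u : ℕ → ℝ} {c : ℝ} (hc : 0 ≤ c) (h0 : ∀ n, 0 ≤ u n)
    (h1 : ∀ n, u n ≤ 1) :
    liminf (fun n => c * u n) atTop = c * liminf u atTop := by
  have hmono : Monotone (fun y : ℝ => c * y) := monotone_mul_left_of_nonneg hc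
  have := hmono.map_liminf_of_continuousAt (F := atTop) u
    ((continuous_const.mul continuous_id).continuousAt)
    (isCoboundedUnder_ge_of_le _ (x := 1) h1)
    (isBoundedUnder_of ⟨0, h0⟩)
  rw [show ((fun y : ℝ => c * y) ∘ u) = fun n => c * u n from rfl] at this
  exact this.symm

lemma real_limsup_const_mul {u : ℕ → ℝ} {c : ℝ} (hc : 0 ≤ c) (h0 : ∀ n, 0 ≤ u n)
    (h1 : ∀ n, u n ≤ 1) :
    limsup (fun n => c * u n) atTop = c * limsup u atTop := by
  have hmono : Monotone (fun y : ℝ => c * y) := monotone_mul_left_of_nonneg hc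
  have := hmono.map_limsup_of_continuousAt (F := atTop) u
    ((continuous_const.mul continuous_id).continuousAt)
    (isBoundedUnder_of ⟨1, h1⟩)
    (isCoboundedUnder_le_of_le _ (x := 0) h0)
  rw [show ((fun y : ℝ => c * y) ∘ u) = fun n => c * u n from rfl] at this
  exact this.symm

/-! corrLower / corrUpper basic facts -/

lemma corrLower_nonneg (f : X → X) (m : ℕ) (x : X) (ε : ℝ) : 0 ≤ corrLower f m x ε := by
  unfold corrLower
  exact le_liminf_of_le (isCoboundedUnder_ge_of_le _ (x := 1) (fun n => corrSum_le_one f m x n ε))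
    (Eventually.of_forall (fun n => corrSum_nonneg f m x n ε))

lemma corrLower_le_one (f : X → X) (m : ℕ) (x : X) (ε : ℝ) : corrLower f m x ε ≤ 1 := by
  unfold corrLower
  exact liminf_le_of_le (isBoundedUnder_of ⟨0, fun n => corrSum_nonneg f m x n ε⟩)
    (fun b hb => by
      obtain ⟨n, hn⟩ := hb.exists
      exact hn.trans (corrSum_le_one f m x n ε))

lemma corrUpper_nonneg (f : X → X) (m : ℕ) (x : X) (ε : ℝ) : 0 ≤ corrUpper f m x ε := by
  unfold corrUpper
  exact le_limsup_of_frequently_le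
    (Frequently.of_forall (fun n => corrSum_nonneg f m x n ε))
    (isBoundedUnder_of ⟨1, fun n => corrSum_le_one f m x n ε⟩)

lemma corrUpper_le_one (f : X → X) (m : ℕ) (x : X) (ε : ℝ) : corrUpper f m x ε ≤ 1 := by
  unfold corrUpper
  exact limsup_le_of_le (isCoboundedUnder_le_of_le _ (x := 0) (fun n => corrSum_nonneg f m x n ε))
    (Eventually.of_forall (fun n => corrSum_le_one f m x n ε))

lemma corrLower_le_corrUpper (f : X → X) (m : ℕ) (x : X) (ε : ℝ) :
    corrLower f m x ε ≤ corrUpper f m x ε := by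
  unfold corrLower corrUpper
  exact liminf_le_limsup (isBoundedUnder_of ⟨1, fun n => corrSum_le_one f m x n ε⟩)
    (isBoundedUnder_of ⟨0, fun n => corrSum_nonneg f m x n ε⟩)

lemma corrLower_mono_eps {f : X → X} {m : ℕ} {x : X} {ε ε' : ℝ} (h : ε ≤ ε') :
    corrLower f m x ε ≤ corrLower f m x ε' := by
  unfold corrLower
  exact liminf_le_liminf (Eventually.of_forall fun n => corrSum_mono_eps h)
    (isBoundedUnder_of ⟨0, fun n => corrSum_nonneg f m x n ε⟩)
    (isCoboundedUnder_ge_of_le _ (x := 1) (fun n => corrSum_le_one f m x n ε'))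

lemma corrUpper_mono_eps {f : X → X} {m : ℕ} {x : X} {ε ε' : ℝ} (h : ε ≤ ε') :
    corrUpper f m x ε ≤ corrUpper f m x ε' := by
  unfold corrUpper
  exact limsup_le_limsup (Eventually.of_forall fun n => corrSum_mono_eps h)
    (isCoboundedUnder_le_of_le _ (x := 0) (fun n => corrSum_nonneg f m x n ε))
    (isBoundedUnder_of ⟨1, fun n => corrSum_le_one f m x n ε'⟩)

lemma corrLower_anti_m {f : X → X} {m m' : ℕ} {x : X} {ε : ℝ} (h : m ≤ m') :
    corrLower f m' x ε ≤ corrLower f m x ε := by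
  unfold corrLower
  exact liminf_le_liminf (Eventually.of_forall fun n => corrSum_anti_m h)
    (isBoundedUnder_of ⟨0, fun n => corrSum_nonneg f m' x n ε⟩)
    (isCoboundedUnder_ge_of_le _ (x := 1) (fun n => corrSum_le_one f m x n ε))

/-! Positivity of correlation sums -/

lemma exists_corrSum_lb [CompactSpace X] {g : X → X} (hg : Continuous g) (m : ℕ) (x : X)
    {δ : ℝ} (hδ : 0 < δ) :
    ∃ L : ℕ, 0 < L ∧ ∀ n : ℕ, 0 < n → 1 / (L : ℝ) ≤ corrSum g m x n δ := by
  obtain ⟨δ₂, hδ₂, h₂⟩ := exists_unif_delta g hg m hδ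
  have hcov : (univ : Set X) ⊆ ⋃ y : X, Metric.ball y (δ₂ / 2) := by
    intro p _
    exact mem_iUnion.2 ⟨p, Metric.mem_ball_self (by linarith)⟩
  obtain ⟨t, ht⟩ := isCompact_univ.elim_finite_subcover
    (fun y : X => Metric.ball y (δ₂ / 2)) (fun y => Metric.isOpen_ball) hcov
  have hmem : ∀ p : X, ∃ c, c ∈ t ∧ p ∈ Metric.ball c (δ₂ / 2) := by
    intro p
    have := ht (mem_univ p)
    simpa using this
  choose ℓ hℓt hℓb using hmem
  -- points with the same label are bowen-δ-close
  have hpair : ∀ p q : X, ℓ p = ℓ q → bowenDist g m p q ≤ δ := by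
    intro p q hpq
    have h1 : dist p q ≤ δ₂ := by
      have hp := hℓb p
      have hq := hℓb q
      rw [Metric.mem_ball] at hp hq
      calc dist p q ≤ dist p (ℓ p) + dist (ℓ q) q := by
            rw [hpq]; rw [dist_comm (ℓ q) q]; exact dist_triangle_right p q (ℓ q)
        _ ≤ δ₂ / 2 + δ₂ / 2 := by
            rw [dist_comm (ℓ q) q]
            exact add_le_add hp.le hq.le
        _ = δ₂ := by ring
    rw [bowenDist_le_iff hδ.le]
    exact h₂ p q h1
  refine ⟨t.card, Finset.card_pos.2 ⟨ℓ x, hℓt x⟩, fun n hn => ?_⟩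
  set lab : ℕ → X := fun i => ℓ (g^[i] x) with hlab
  set s := Finset.range n with hs
  set T := (s ×ˢ s).filter (fun q : ℕ × ℕ => bowenDist g m (g^[q.1] x) (g^[q.2] x) ≤ δ) with hT
  set S := (s ×ˢ s).filter (fun q : ℕ × ℕ => lab q.1 = lab q.2) with hS
  have hST : S ⊆ T := by
    intro q hq
    rw [hS, Finset.mem_filter] at hq
    rw [hT, Finset.mem_filter]
    exact ⟨hq.1, hpair _ _ hq.2⟩
  -- fiber decomposition of S
  have hfib : S.card = ∑ c ∈ t, ((s.filter fun i => lab i = c).card *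
      (s.filter fun i => lab i = c).card) := by
    rw [Finset.card_eq_sum_card_fiberwise (f := fun q : ℕ × ℕ => lab q.1)
      (t := t) (fun q hq => hℓt _)]
    apply Finset.sum_congr rfl
    intro c _
    have : S.filter (fun q : ℕ × ℕ => lab q.1 = c) =
        (s.filter fun i => lab i = c) ×ˢ (s.filter fun i => lab i = c) := by
      ext q
      simp only [hS, Finset.mem_filter, Finset.mem_product]
      constructor
      · rintro ⟨⟨⟨hq1, hq2⟩, he⟩, hc⟩
        exact ⟨⟨hq1, hc⟩, ⟨hq2, he ▸ hc⟩⟩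
      · rintro ⟨⟨hq1, hc1⟩, ⟨hq2, hc2⟩⟩
        exact ⟨⟨⟨hq1, hq2⟩, hc1.trans hc2.symm⟩, hc1⟩
    rw [this, Finset.card_product]
  have hsum : ∑ c ∈ t, (s.filter fun i => lab i = c).card = n := by
    rw [← Finset.card_eq_sum_card_fiberwise (f := lab) (t := t) (fun i _ => hℓt _)]
    simp [hs]
  -- Cauchy-Schwarz
  have hCS : ((n : ℝ)) ^ 2 ≤ (t.card : ℝ) * (S.card : ℝ) := by
    have := sq_sum_le_card_mul_sum_sq (s := t)
      (f := fun c => ((s.filter fun i => lab i = c).card : ℝ))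
    have hl : (∑ c ∈ t, ((s.filter fun i => lab i = c).card : ℝ)) = (n : ℝ) := by
      rw [← Nat.cast_sum, hsum]
    rw [hl] at this
    refine this.trans ?_
    apply mul_le_mul_of_nonneg_left ?_ (by positivity)
    rw [hfib]
    push_cast
    apply le_of_eq
    apply Finset.sum_congr rfl
    intro c _
    ring
  have hTcard : ((n : ℝ)) ^ 2 ≤ (t.card : ℝ) * (T.card : ℝ) := by
    refine hCS.trans ?_
    apply mul_le_mul_of_nonneg_left ?_ (by positivity)
    exact_mod_cast Finset.card_le_card hST
  -- conclude
  have htpos : (0 : ℝ) < (t.card : ℝ) := by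
    exact_mod_cast Finset.card_pos.2 ⟨ℓ x, hℓt x⟩
  have hnpos : (0 : ℝ) < (n : ℝ) ^ 2 := by positivity
  unfold corrSum
  rw [div_le_div_iff₀ htpos hnpos]
  calc (1 : ℝ) * (n : ℝ) ^ 2 = (n : ℝ) ^ 2 := one_mul _
    _ ≤ (t.card : ℝ) * (T.card : ℝ) := hTcard
    _ = (T.card : ℝ) * (t.card : ℝ) := mul_comm _ _

lemma corrLower_pos [CompactSpace X] {g : X → X} (hg : Continuous g) (m : ℕ) (x : X)
    {δ : ℝ} (hδ : 0 < δ) : 0 < corrLower g m x δ := by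
  obtain ⟨L, hL, hlb⟩ := exists_corrSum_lb hg m x hδ
  have h1L : (0 : ℝ) < 1 / (L : ℝ) := by positivity
  refine lt_of_lt_of_le h1L ?_
  unfold corrLower
  apply le_liminf_of_le
    (isCoboundedUnder_ge_of_le _ (x := 1) (fun n => corrSum_le_one g m x n δ))
  filter_upwards [eventually_ge_atTop 1] with n hn
  exact hlb n hn

lemma corrUpper_pos [CompactSpace X] {g : X → X} (hg : Continuous g) (m : ℕ) (x : X)
    {δ : ℝ} (hδ : 0 < δ) : 0 < corrUpper g m x δ :=
  lt_of_lt_of_le (corrLower_pos hg m x hδ) (corrLower_le_corrUpper g m x δ)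

/-! Comparison of correlation sums for `f^[k]` and `f` -/

lemma corrSum_compare {f : X → X} {k : ℕ} (hk : 0 < k) (m : ℕ) (x : X) {n N : ℕ}
    (h : k * n ≤ N) {c : ℝ} (hc : (N : ℝ) ^ 2 ≤ c * (n : ℝ) ^ 2) {δ ε : ℝ}
    (key : ∀ y z : X, bowenDist (f^[k]) m y z ≤ δ → bowenDist f (k * m) y z ≤ ε) :
    corrSum (f^[k]) m x n δ ≤ c * corrSum f (k * m) x N ε := by
  rcases Nat.eq_zero_or_pos n with rfl | hn
  · have hN : N = 0 := by
      have : ((N : ℝ)) ^ 2 ≤ 0 := by simpa using hc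
      have : (N : ℝ) = 0 := by nlinarith [sq_nonneg (N : ℝ)]
      exact_mod_cast this
    subst hN
    unfold corrSum
    simp
  · have hN : 0 < N := lt_of_lt_of_le (Nat.mul_pos hk hn) h
    have hcard := corr_card_le hk m x h key
    unfold corrSum
    set C1 := ((Finset.range n ×ˢ Finset.range n).filter fun q =>
        bowenDist (f^[k]) m ((f^[k])^[q.1] x) ((f^[k])^[q.2] x) ≤ δ).card with hC1
    set C2 := ((Finset.range N ×ˢ Finset.range N).filter fun q =>
        bowenDist f (k * m) (f^[q.1] x) (f^[q.2] x) ≤ ε).card with hC2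
    have hnp : (0 : ℝ) < (n : ℝ) ^ 2 := by positivity
    have hNp : (0 : ℝ) < (N : ℝ) ^ 2 := by positivity
    rw [div_le_iff₀ hnp]
    have hC12 : (C1 : ℝ) ≤ (C2 : ℝ) := by exact_mod_cast hcard
    have h2 : c * ((C2 : ℝ) / (N : ℝ) ^ 2) * (n : ℝ) ^ 2 = (C2 : ℝ) * (c * (n:ℝ)^2 / (N:ℝ)^2) := by
      field_simp
    rw [h2]
    have h3 : (1 : ℝ) ≤ c * (n:ℝ)^2 / (N:ℝ)^2 := by
      rw [le_div_iff₀ hNp]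
      linarith
    nlinarith [Nat.cast_nonneg (α := ℝ) C2]

lemma tendsto_mul_left_atTop {k : ℕ} (hk : 0 < k) : Tendsto (fun n : ℕ => k * n) atTop atTop :=
  tendsto_atTop_mono (fun n => Nat.le_mul_of_pos_left n hk) tendsto_id

lemma tendsto_div_const_atTop {k : ℕ} (hk : 0 < k) : Tendsto (fun N : ℕ => N / k) atTop atTop := by
  apply tendsto_atTop.2
  intro b
  filter_upwards [eventually_ge_atTop (k * b)] with N hN
  exact (Nat.le_div_iff_mul_le hk).2 (by rw [mul_comm]; exact hN)

lemma corrUpper_le_iter [CompactSpace X] {f : X → X} {k : ℕ} (hk : 0 < k) (m : ℕ) (x : X)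
    {δ ε : ℝ}
    (key : ∀ y z : X, bowenDist (f^[k]) m y z ≤ δ → bowenDist f (k * m) y z ≤ ε) :
    corrUpper (f^[k]) m x δ ≤ 4 * (k : ℝ) ^ 2 * corrUpper f (k * m) x ε := by
  have hk1 : (1 : ℝ) ≤ (k : ℝ) := by exact_mod_cast hk
  have step : ∀ n, corrSum (f^[k]) m x n δ ≤
      4 * (k : ℝ) ^ 2 * corrSum f (k * m) x (k * n) ε := by
    intro n
    apply corrSum_compare hk m x (le_refl (k * n)) ?_ key
    push_cast
    nlinarith [sq_nonneg ((k : ℝ) * (n : ℝ)), Nat.cast_nonneg (α := ℝ) n]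
  have hb := fun n => corrSum_nonneg f (k * m) x (k * n) ε
  have hb1 := fun n => corrSum_le_one f (k * m) x (k * n) ε
  calc corrUpper (f^[k]) m x δ
      ≤ limsup (fun n => 4 * (k : ℝ) ^ 2 * corrSum f (k * m) x (k * n) ε) atTop := by
        unfold corrUpper
        apply limsup_le_limsup (Eventually.of_forall step)
          (isCoboundedUnder_le_of_le _ (x := 0) (fun n => corrSum_nonneg _ m x n δ))
          (isBoundedUnder_of ⟨4 * (k : ℝ) ^ 2, fun n => by nlinarith [hb n, hb1 n]⟩)
    _ = 4 * (k : ℝ) ^ 2 * limsup (fun n => corrSum f (k * m) x (k * n) ε) atTop :=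
        real_limsup_const_mul (by positivity) hb hb1
    _ ≤ 4 * (k : ℝ) ^ 2 * corrUpper f (k * m) x ε := by
        apply mul_le_mul_of_nonneg_left ?_ (by positivity)
        unfold corrUpper
        exact real_limsup_comp_le_limsup (fun n => corrSum_nonneg f (k*m) x n ε)
          (fun n => corrSum_le_one f (k*m) x n ε) (tendsto_mul_left_atTop hk)

lemma corrLower_le_iter [CompactSpace X] {f : X → X} {k : ℕ} (hk : 0 < k) (m : ℕ) (x : X)
    {δ ε : ℝ}
    (key : ∀ y z : X, bowenDist (f^[k]) m y z ≤ δ → bowenDist f (k * m) y z ≤ ε) :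
    corrLower (f^[k]) m x δ ≤ 4 * (k : ℝ) ^ 2 * corrLower f (k * m) x ε := by
  have hk1 : (1 : ℝ) ≤ (k : ℝ) := by exact_mod_cast hk
  have step : ∀ N : ℕ, k ≤ N → corrSum (f^[k]) m x (N / k) δ ≤
      4 * (k : ℝ) ^ 2 * corrSum f (k * m) x N ε := by
    intro N hN
    apply corrSum_compare hk m x (by rw [mul_comm]; exact Nat.div_mul_le_self N k) ?_ key
    -- (N:ℝ)^2 ≤ 4k^2 (N/k : ℕ)^2
    have h1 : N < N / k * k + k := Nat.lt_div_mul_add hk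
    have h2 : 1 ≤ N / k := (Nat.one_le_div_iff hk).2 hN
    have h3 : N ≤ 2 * (N / k * k) := by
      have : k ≤ N / k * k := Nat.le_mul_of_pos_left k h2
      omega
    have h4 : (N : ℝ) ≤ 2 * ((N / k : ℕ) : ℝ) * (k : ℝ) := by
      have := (Nat.cast_le (α := ℝ)).2 h3
      push_cast at this
      linarith
    nlinarith [Nat.cast_nonneg (α := ℝ) N, Nat.cast_nonneg (α := ℝ) (N / k)]
  have hb := fun n => corrSum_nonneg f (k * m) x n ε
  have hb1 := fun n => corrSum_le_one f (k * m) x n ε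
  calc corrLower (f^[k]) m x δ
      ≤ liminf (fun N => corrSum (f^[k]) m x (N / k) δ) atTop := by
        unfold corrLower
        exact real_liminf_le_liminf_comp (fun n => corrSum_nonneg _ m x n δ)
          (fun n => corrSum_le_one _ m x n δ) (tendsto_div_const_atTop hk)
    _ ≤ liminf (fun N => 4 * (k : ℝ) ^ 2 * corrSum f (k * m) x N ε) atTop := by
        apply liminf_le_liminf ?_
          (isBoundedUnder_of ⟨0, fun n => corrSum_nonneg _ m x (n / k) δ⟩)
          (isCoboundedUnder_ge_of_le _ (x := 4 * (k : ℝ) ^ 2)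
            (fun n => by nlinarith [hb n, hb1 n]))
        filter_upwards [eventually_ge_atTop k] with N hN
        exact step N hN
    _ = 4 * (k : ℝ) ^ 2 * corrLower f (k * m) x ε :=
        real_liminf_const_mul (by positivity) hb hb1

/-! EReal helpers -/

lemma ereal_nat_mul_coe {k : ℕ} {c : ℝ} : (k : EReal) * ((c : ℝ) : EReal) = ((k * c : ℝ) : EReal) := by
  rw [← EReal.coe_coe_eq_natCast, ← EReal.coe_mul]

lemma ereal_nat_nonneg (k : ℕ) : (0 : EReal) ≤ (k : EReal) := by
  rw [← EReal.coe_coe_eq_natCast]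
  exact EReal.coe_nonneg.2 (Nat.cast_nonneg k)

lemma ereal_final {k : ℕ} (hk : 0 < k) {E : ℝ → EReal} {B : EReal}
    (h : ∀ ε : ℝ, 0 < ε → (k : EReal) * E ε ≤ B) :
    (k : EReal) * Filter.limsup E (𝓝[>] (0 : ℝ)) ≤ B := by
  have hkR : (0 : ℝ) < (k : ℝ) := Nat.cast_pos.2 hk
  by_contra hcon
  push_neg at hcon
  obtain ⟨r, hBr, hrk⟩ := EReal.exists_between_coe_real hcon
  have h4 : (k : EReal) * ((r / k : ℝ) : EReal) = ((r : ℝ) : EReal) := by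
    rw [ereal_nat_mul_coe]
    congr 1
    field_simp
  have hcΛ : ((r / k : ℝ) : EReal) < limsup E (𝓝[>] (0 : ℝ)) := by
    by_contra h2
    push_neg at h2
    have h3 : (k : EReal) * limsup E (𝓝[>] (0 : ℝ)) ≤ (k : EReal) * ((r / k : ℝ) : EReal) :=
      mul_le_mul_of_nonneg_left h2 (ereal_nat_nonneg k)
    rw [h4] at h3
    exact absurd (hrk.trans_le h3) (lt_irrefl _)
  have freq := frequently_lt_of_lt_limsup (by isBoundedDefault) hcΛ
  obtain ⟨ε, hcε, hε⟩ := (freq.and_eventually eventually_mem_nhdsWithin).exists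
  have h5 : ((r : ℝ) : EReal) ≤ (k : EReal) * E ε := by
    rw [← h4]
    exact mul_le_mul_of_nonneg_left hcε.le (ereal_nat_nonneg k)
  exact absurd (h5.trans (h ε hε)) (not_le.2 hBr)

/-! Core EReal lemmas -/

set_option maxHeartbeats 1000000 in
lemma ereal_core_limsup {k : ℕ} (hk : 0 < k) {ψ φ : ℕ → ℝ} {lC : ℝ} (hlC : 0 ≤ lC)
    (hψ0 : ∀ M, 0 ≤ ψ M) (hφ0 : ∀ m, 0 ≤ φ m)
    (est : ∀ M : ℕ, 1 ≤ M → (M : ℝ) * ψ M - lC ≤ ((M / k + 1 : ℕ) : ℝ) * φ (M / k + 1)) :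
    (k : EReal) * Filter.limsup (fun M : ℕ => ((ψ M : ℝ) : EReal)) Filter.atTop ≤
      Filter.limsup (fun m : ℕ => ((φ m : ℝ) : EReal)) Filter.atTop := by
  have hkR : (0 : ℝ) < (k : ℝ) := Nat.cast_pos.2 hk
  set Λ : EReal := Filter.limsup (fun M : ℕ => ((ψ M : ℝ) : EReal)) Filter.atTop with hΛdef
  set T : EReal := Filter.limsup (fun m : ℕ => ((φ m : ℝ) : EReal)) Filter.atTop with hTdef
  have hT0 : ((0 : ℝ) : EReal) ≤ T :=
    le_limsup_of_frequently_le' (Frequently.of_forall fun m => EReal.coe_le_coe_iff.2 (hφ0 m))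
  have claim : ∀ r : ℝ, ((r : ℝ) : EReal) < (k : EReal) * Λ → ((r : ℝ) : EReal) ≤ T := by
    intro r hr
    rcases le_or_gt r 0 with hr0 | hr0
    · exact le_trans (EReal.coe_le_coe_iff.2 hr0) hT0
    · obtain ⟨r', hrr', hr'⟩ := EReal.exists_between_coe_real hr
      have hrr'R : r < r' := EReal.coe_lt_coe_iff.1 hrr'
      set c : ℝ := r' / k with hcdef
      have hcpos : 0 < c := div_pos (lt_trans hr0 hrr'R) hkR
      have hkc : (k : ℝ) * c = r' := by rw [hcdef]; field_simp
      have hcΛ : ((c : ℝ) : EReal) < Λ := by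
        by_contra h2
        push_neg at h2
        have h3 : (k : EReal) * Λ ≤ (k : EReal) * ((c : ℝ) : EReal) :=
          mul_le_mul_of_nonneg_left h2 (ereal_nat_nonneg k)
        rw [ereal_nat_mul_coe, hkc] at h3
        exact absurd (hr'.trans_le h3) (lt_irrefl _)
      have freq : ∃ᶠ M in atTop, ((c : ℝ) : EReal) < ((ψ M : ℝ) : EReal) :=
        frequently_lt_of_lt_limsup (by isBoundedDefault) hcΛ
      obtain ⟨M₁, hM₁⟩ := exists_nat_ge (lC / c)
      obtain ⟨M₂, hM₂⟩ := exists_nat_ge ((k : ℝ) * (r + lC) / (r' - r))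
      set M₀ : ℕ := max 1 (max M₁ M₂) with hM₀def
      have freq' : ∃ᶠ m in atTop, ((r : ℝ) : EReal) ≤ ((φ m : ℝ) : EReal) := by
        rw [frequently_atTop]
        intro a
        obtain ⟨M, hMge, hcM⟩ := frequently_atTop.1 freq (max M₀ (k * a))
        have hM0 : M₀ ≤ M := le_trans (le_max_left _ _) hMge
        have hM1 : 1 ≤ M := le_trans (le_max_left _ _) hM0
        have hMka : k * a ≤ M := le_trans (le_max_right _ _) hMge
        refine ⟨M / k + 1, ?_, ?_⟩
        · have : a ≤ M / k := (Nat.le_div_iff_mul_le hk).2 (by rw [mul_comm]; exact hMka)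
          omega
        · rw [EReal.coe_le_coe_iff]
          have hcMR : c < ψ M := EReal.coe_lt_coe_iff.1 hcM
          have hMR : (1 : ℝ) ≤ (M : ℝ) := by exact_mod_cast hM1
          have hMRpos : (0 : ℝ) < (M : ℝ) := lt_of_lt_of_le one_pos hMR
          have hMc : lC ≤ (M : ℝ) * c := by
            have hMM₁ : (M₁ : ℝ) ≤ (M : ℝ) := by
              exact_mod_cast le_trans (le_trans (le_max_left _ _) (le_max_right 1 _)) hM0
            have h5 : lC / c ≤ (M : ℝ) := hM₁.trans hMM₁
            calc lC = lC / c * c := by field_simp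
              _ ≤ (M : ℝ) * c := by nlinarith
          have hnum : (k : ℝ) * (r + lC) ≤ (M : ℝ) * (r' - r) := by
            have hMM₂ : (M₂ : ℝ) ≤ (M : ℝ) := by
              exact_mod_cast le_trans (le_trans (le_max_right _ _) (le_max_right 1 _)) hM0
            have h6 : (k : ℝ) * (r + lC) / (r' - r) ≤ (M : ℝ) := hM₂.trans hMM₂
            have h7 : (0 : ℝ) < r' - r := by linarith
            calc (k : ℝ) * (r + lC) = (k : ℝ) * (r + lC) / (r' - r) * (r' - r) := by field_simp
              _ ≤ (M : ℝ) * (r' - r) := by nlinarith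
          have h8 : (M : ℝ) * c - lC ≤ ((M / k + 1 : ℕ) : ℝ) * φ (M / k + 1) := by
            have h9 := est M hM1
            nlinarith
          have hm'pos : (0 : ℝ) < ((M / k + 1 : ℕ) : ℝ) := by positivity
          have hm'le : ((M / k + 1 : ℕ) : ℝ) * (k : ℝ) ≤ (M : ℝ) + (k : ℝ) := by
            have h10 : k * (M / k + 1) ≤ M + k := by
              have h11 := Nat.div_mul_le_self M k
              have h12 : k * (M / k + 1) = M / k * k + k := by ring
              omega
            calc ((M / k + 1 : ℕ) : ℝ) * (k : ℝ) = ((k * (M / k + 1) : ℕ) : ℝ) := by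
                  push_cast; ring
              _ ≤ ((M + k : ℕ) : ℝ) := by exact_mod_cast h10
              _ = (M : ℝ) + (k : ℝ) := by push_cast; ring
          have h12 : ((M : ℝ) * c - lC) / ((M / k + 1 : ℕ) : ℝ) ≤ φ (M / k + 1) := by
            rw [div_le_iff₀ hm'pos]
            nlinarith
          refine le_trans ?_ h12
          rw [le_div_iff₀ hm'pos]
          have h13 : r * (((M / k + 1 : ℕ) : ℝ) * (k : ℝ)) ≤ r * ((M : ℝ) + (k : ℝ)) := by
            nlinarith
          have h14 : r * ((M : ℝ) + (k : ℝ)) ≤ (k : ℝ) * ((M : ℝ) * c - lC) := by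
            have hkcM : (k : ℝ) * ((M : ℝ) * c) = (M : ℝ) * r' := by
              rw [← hkc]; ring
            nlinarith
          nlinarith
      exact le_limsup_of_frequently_le' freq'
  by_contra hcon
  push_neg at hcon
  obtain ⟨r, hTr, hrk⟩ := EReal.exists_between_coe_real hcon
  exact absurd (claim r hrk) (not_le.2 hTr)

lemma cancel_aux {M : ℕ} (a : ℝ) (hM : 1 ≤ M) :
    (M : ℝ) * (-(1 / (M : ℝ)) * Real.log a) = -Real.log a := by
  have h : (M : ℝ) ≠ 0 := by positivity
  field_simp

lemma key_upper [CompactSpace X] {f : X → X} (hf : Continuous f)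
    {k : ℕ} (hk : 0 < k) (x : X) {ε : ℝ} (hε : 0 < ε) :
    (k : EReal) * (Filter.limsup (fun M : ℕ =>
        ((-(1 / (M : ℝ)) * Real.log (corrLower f M x ε) : ℝ) : EReal)) Filter.atTop)
      ≤ entrUpper (f^[k]) x := by
  obtain ⟨δ, hδpos, hδ⟩ := exists_unif_delta f hf k hε
  have key := fun m => bowen_iter_key hk m hδpos.le hε.le hδ
  have hfk : Continuous (f^[k]) := hf.iterate k
  have hk1 : (1 : ℝ) ≤ (k : ℝ) := by exact_mod_cast hk
  have hC1 : (1 : ℝ) ≤ 4 * (k : ℝ) ^ 2 := by nlinarith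
  have hCpos : (0 : ℝ) < 4 * (k : ℝ) ^ 2 := lt_of_lt_of_le one_pos hC1
  have hlogC : 0 ≤ Real.log (4 * (k : ℝ) ^ 2) := Real.log_nonneg hC1
  have hcf : ∀ M, 0 < corrLower f M x ε := fun M => corrLower_pos hf M x hε
  have hcf1 : ∀ M, corrLower f M x ε ≤ 1 := fun M => corrLower_le_one f M x ε
  have hcfk : ∀ m, 0 < corrLower (f^[k]) m x δ := fun m => corrLower_pos hfk m x hδpos
  have hcfk1 : ∀ m, corrLower (f^[k]) m x δ ≤ 1 := fun m => corrLower_le_one (f^[k]) m x δ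
  have hψ0 : ∀ M : ℕ, 0 ≤ -(1 / (M : ℝ)) * Real.log (corrLower f M x ε) := by
    intro M
    rw [neg_mul_comm]
    exact mul_nonneg (by positivity) (neg_nonneg.2 (Real.log_nonpos (hcf M).le (hcf1 M)))
  have hφ0 : ∀ m : ℕ, 0 ≤ -(1 / (m : ℝ)) * Real.log (corrLower (f^[k]) m x δ) := by
    intro m
    rw [neg_mul_comm]
    exact mul_nonneg (by positivity) (neg_nonneg.2 (Real.log_nonpos (hcfk m).le (hcfk1 m)))
  have est : ∀ M : ℕ, 1 ≤ M →
      (M : ℝ) * (-(1 / (M : ℝ)) * Real.log (corrLower f M x ε)) - Real.log (4 * (k : ℝ) ^ 2) ≤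
      ((M / k + 1 : ℕ) : ℝ) *
        (-(1 / ((M / k + 1 : ℕ) : ℝ)) * Real.log (corrLower (f^[k]) (M / k + 1) x δ)) := by
    intro M hM
    have hm'1 : 1 ≤ M / k + 1 := Nat.le_add_left 1 (M / k)
    have hMm' : M ≤ k * (M / k + 1) := by
      have h1 := Nat.lt_div_mul_add (a := M) hk
      have h2 : M / k * k + k = k * (M / k + 1) := by ring
      omega
    have hAC : corrLower (f^[k]) (M / k + 1) x δ ≤
        4 * (k : ℝ) ^ 2 * corrLower f (k * (M / k + 1)) x ε :=
      corrLower_le_iter hk (M / k + 1) x (key (M / k + 1))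
    have hBD : corrLower f (k * (M / k + 1)) x ε ≤ corrLower f M x ε := corrLower_anti_m hMm'
    have hACD : corrLower (f^[k]) (M / k + 1) x δ ≤
        4 * (k : ℝ) ^ 2 * corrLower f M x ε := by nlinarith [hcf (k * (M / k + 1))]
    have hlog : Real.log (corrLower (f^[k]) (M / k + 1) x δ) ≤
        Real.log (4 * (k : ℝ) ^ 2) + Real.log (corrLower f M x ε) := by
      rw [← Real.log_mul (ne_of_gt hCpos) (ne_of_gt (hcf M))]
      exact Real.log_le_log (hcfk (M / k + 1)) hACD
    rw [cancel_aux _ hM, cancel_aux _ hm'1]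
    linarith
  refine le_trans
    (ereal_core_limsup hk hlogC hψ0 hφ0 est) ?_
  unfold entrUpper
  apply le_limsup_of_frequently_le'
  apply Eventually.frequently
  filter_upwards [Ioo_mem_nhdsGT_of_mem (show (0 : ℝ) ∈ Ico (0 : ℝ) δ from ⟨le_refl 0, hδpos⟩)]
    with ε' hε'
  refine limsup_le_limsup (Eventually.of_forall fun m => ?_)
  apply EReal.coe_le_coe_iff.2
  have hpos' : 0 < corrLower (f^[k]) m x ε' := corrLower_pos hfk m x hε'.1
  have hmono : corrLower (f^[k]) m x ε' ≤ corrLower (f^[k]) m x δ := corrLower_mono_eps hε'.2.le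
  have hlog : Real.log (corrLower (f^[k]) m x ε') ≤ Real.log (corrLower (f^[k]) m x δ) :=
    Real.log_le_log hpos' hmono
  exact mul_le_mul_of_nonpos_left hlog (neg_nonpos.2 (by positivity))

set_option maxHeartbeats 1000000 in
lemma ereal_core_liminf {k : ℕ} (hk : 0 < k) {ψ φ : ℕ → ℝ} {lC : ℝ} (hlC : 0 ≤ lC)
    (hφ0 : ∀ m, 0 ≤ φ m)
    (est : ∀ m : ℕ, 1 ≤ m → ((k * m : ℕ) : ℝ) * ψ (k * m) - lC ≤ (m : ℝ) * φ m) :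
    (k : EReal) * Filter.liminf (fun M : ℕ => ((ψ M : ℝ) : EReal)) Filter.atTop ≤
      Filter.liminf (fun m : ℕ => ((φ m : ℝ) : EReal)) Filter.atTop := by
  have hkR : (0 : ℝ) < (k : ℝ) := Nat.cast_pos.2 hk
  set Λ : EReal := Filter.liminf (fun M : ℕ => ((ψ M : ℝ) : EReal)) Filter.atTop with hΛdef
  set T : EReal := Filter.liminf (fun m : ℕ => ((φ m : ℝ) : EReal)) Filter.atTop with hTdef
  have hT0 : ((0 : ℝ) : EReal) ≤ T :=
    le_liminf_of_le (by isBoundedDefault)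
      (Eventually.of_forall fun m => EReal.coe_le_coe_iff.2 (hφ0 m))
  have claim : ∀ r : ℝ, ((r : ℝ) : EReal) < (k : EReal) * Λ → ((r : ℝ) : EReal) ≤ T := by
    intro r hr
    rcases le_or_gt r 0 with hr0 | hr0
    · exact le_trans (EReal.coe_le_coe_iff.2 hr0) hT0
    · obtain ⟨r', hrr', hr'⟩ := EReal.exists_between_coe_real hr
      have hrr'R : r < r' := EReal.coe_lt_coe_iff.1 hrr'
      set c : ℝ := r' / k with hcdef
      have hcpos : 0 < c := div_pos (lt_trans hr0 hrr'R) hkR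
      have hkc : (k : ℝ) * c = r' := by rw [hcdef]; field_simp
      have hcΛ : ((c : ℝ) : EReal) < Λ := by
        by_contra h2
        push_neg at h2
        have h3 : (k : EReal) * Λ ≤ (k : EReal) * ((c : ℝ) : EReal) :=
          mul_le_mul_of_nonneg_left h2 (ereal_nat_nonneg k)
        rw [ereal_nat_mul_coe, hkc] at h3
        exact absurd (hr'.trans_le h3) (lt_irrefl _)
      have ev : ∀ᶠ M in atTop, ((c : ℝ) : EReal) < ((ψ M : ℝ) : EReal) :=
        eventually_lt_of_lt_liminf hcΛ (by isBoundedDefault)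
      obtain ⟨m₀, hm₀⟩ := exists_nat_ge (lC / (r' - r))
      have ev' : ∀ᶠ m in atTop, ((r : ℝ) : EReal) ≤ ((φ m : ℝ) : EReal) := by
        filter_upwards [eventually_ge_atTop (max 1 m₀),
          (tendsto_mul_left_atTop hk).eventually ev] with m hm hcm
        rw [EReal.coe_le_coe_iff]
        have h1m : 1 ≤ m := le_trans (le_max_left _ _) hm
        have hmm₀ : m₀ ≤ m := le_trans (le_max_right _ _) hm
        have hmR : (1 : ℝ) ≤ (m : ℝ) := by exact_mod_cast h1m
        have hmpos : (0 : ℝ) < (m : ℝ) := lt_of_lt_of_le one_pos hmR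
        have hcmR : c < ψ (k * m) := EReal.coe_lt_coe_iff.1 hcm
        have h4 := est m h1m
        have h5 : ((k * m : ℕ) : ℝ) = (k : ℝ) * (m : ℝ) := by push_cast; ring
        have h6 : (k : ℝ) * (m : ℝ) * c ≤ ((k * m : ℕ) : ℝ) * ψ (k * m) := by
          rw [h5]
          nlinarith
        -- φ m ≥ k c - lC / m ≥ r' - (r' - r) = r
        have h7 : (k : ℝ) * (m : ℝ) * c - lC ≤ (m : ℝ) * φ m := by linarith
        have h8 : lC ≤ (m : ℝ) * (r' - r) := by
          have hmm₀R : (m₀ : ℝ) ≤ (m : ℝ) := by exact_mod_cast hmm₀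
          have h9 : lC / (r' - r) ≤ (m : ℝ) := hm₀.trans hmm₀R
          have h10 : (0 : ℝ) < r' - r := by linarith
          calc lC = lC / (r' - r) * (r' - r) := by field_simp
            _ ≤ (m : ℝ) * (r' - r) := by nlinarith
        have h11 : (m : ℝ) * r ≤ (m : ℝ) * φ m := by
          have : (k : ℝ) * (m : ℝ) * c = (m : ℝ) * r' := by rw [← hkc]; ring
          nlinarith
        nlinarith
      exact le_liminf_of_le (by isBoundedDefault) ev'
  by_contra hcon
  push_neg at hcon
  obtain ⟨r, hTr, hrk⟩ := EReal.exists_between_coe_real hcon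
  exact absurd (claim r hrk) (not_le.2 hTr)

lemma key_lower [CompactSpace X] {f : X → X} (hf : Continuous f)
    {k : ℕ} (hk : 0 < k) (x : X) {ε : ℝ} (hε : 0 < ε) :
    (k : EReal) * (Filter.liminf (fun M : ℕ =>
        ((-(1 / (M : ℝ)) * Real.log (corrUpper f M x ε) : ℝ) : EReal)) Filter.atTop)
      ≤ entrLower (f^[k]) x := by
  obtain ⟨δ, hδpos, hδ⟩ := exists_unif_delta f hf k hε
  have key := fun m => bowen_iter_key hk m hδpos.le hε.le hδ
  have hfk : Continuous (f^[k]) := hf.iterate k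
  have hk1 : (1 : ℝ) ≤ (k : ℝ) := by exact_mod_cast hk
  have hC1 : (1 : ℝ) ≤ 4 * (k : ℝ) ^ 2 := by nlinarith
  have hCpos : (0 : ℝ) < 4 * (k : ℝ) ^ 2 := lt_of_lt_of_le one_pos hC1
  have hlogC : 0 ≤ Real.log (4 * (k : ℝ) ^ 2) := Real.log_nonneg hC1
  have hcf : ∀ M, 0 < corrUpper f M x ε := fun M => corrUpper_pos hf M x hε
  have hcfk : ∀ m, 0 < corrUpper (f^[k]) m x δ := fun m => corrUpper_pos hfk m x hδpos
  have hcfk1 : ∀ m, corrUpper (f^[k]) m x δ ≤ 1 := fun m => corrUpper_le_one (f^[k]) m x δ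
  have hφ0 : ∀ m : ℕ, 0 ≤ -(1 / (m : ℝ)) * Real.log (corrUpper (f^[k]) m x δ) := by
    intro m
    rw [neg_mul_comm]
    exact mul_nonneg (by positivity) (neg_nonneg.2 (Real.log_nonpos (hcfk m).le (hcfk1 m)))
  have est : ∀ m : ℕ, 1 ≤ m →
      ((k * m : ℕ) : ℝ) * (-(1 / ((k * m : ℕ) : ℝ)) * Real.log (corrUpper f (k * m) x ε)) -
        Real.log (4 * (k : ℝ) ^ 2) ≤
      (m : ℝ) * (-(1 / (m : ℝ)) * Real.log (corrUpper (f^[k]) m x δ)) := by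
    intro m hm
    have hkm1 : 1 ≤ k * m := Nat.mul_le_mul hk hm
    have hAC : corrUpper (f^[k]) m x δ ≤ 4 * (k : ℝ) ^ 2 * corrUpper f (k * m) x ε :=
      corrUpper_le_iter hk m x (key m)
    have hlog : Real.log (corrUpper (f^[k]) m x δ) ≤
        Real.log (4 * (k : ℝ) ^ 2) + Real.log (corrUpper f (k * m) x ε) := by
      rw [← Real.log_mul (ne_of_gt hCpos) (ne_of_gt (hcf (k * m)))]
      exact Real.log_le_log (hcfk m) hAC
    rw [cancel_aux _ hkm1, cancel_aux _ hm]
    linarith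
  refine le_trans (ereal_core_liminf hk hlogC hφ0 est) ?_
  unfold entrLower
  apply le_limsup_of_frequently_le'
  apply Eventually.frequently
  filter_upwards [Ioo_mem_nhdsGT_of_mem (show (0 : ℝ) ∈ Ico (0 : ℝ) δ from ⟨le_refl 0, hδpos⟩)]
    with ε' hε'
  refine liminf_le_liminf (Eventually.of_forall fun m => ?_)
  apply EReal.coe_le_coe_iff.2
  have hpos' : 0 < corrUpper (f^[k]) m x ε' := corrUpper_pos hfk m x hε'.1
  have hmono : corrUpper (f^[k]) m x ε' ≤ corrUpper (f^[k]) m x δ := corrUpper_mono_eps hε'.2.le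
  have hlog : Real.log (corrUpper (f^[k]) m x ε') ≤ Real.log (corrUpper (f^[k]) m x δ) :=
    Real.log_le_log hpos' hmono
  exact mul_le_mul_of_nonpos_left hlog (neg_nonpos.2 (by positivity))

end Aux

/-- `entr⁺(f^k,x) ≥ k·entr⁺(f,x)` and `entr⁻(f^k,x) ≥ k·entr⁻(f,x)`. -/
theorem entr_iterate_ge {X : Type*} [MetricSpace X] [CompactSpace X]
    (f : X → X) (hf : Continuous f) (k : ℕ) (hk : 0 < k) (x : X) :
    (k : EReal) * entrUpper f x ≤ entrUpper (f^[k]) x ∧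
    (k : EReal) * entrLower f x ≤ entrLower (f^[k]) x := by
  constructor
  · unfold entrUpper
    exact ereal_final hk (fun ε hε => key_upper hf hk x hε)
  · unfold entrLower
    exact ereal_final hk (fun ε hε => key_lower hf hk x hε)
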